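/- Let (A★,B★) satisfy Assumption (LQR) and Assumption (bound), and let P★ be a positive-definite matrix satisfying P★ = 𝓡_{A★,B★}(P★). If ε_m ≤ 1/(40 Υ★⁴ ‖P★‖²), β★ ε_p ≤ 1, and ε_m < 1/(8‖P★‖²), then γ₁(ε_m, ε_p) ≤ 1 and consequently γ₁(ε_m, ε_p) γ₂(ε_m) < 1. -/

import Mathlib

/-!
The fixed-point equation gives `P★ - Q = A★ᵀ (P★⁻¹ + S_B)⁻¹ A★ ⪰ 0`, so `I ⪯ Q ⪯ P★` and hence
`1 ≤ β★ ≤ ‖P★‖`. Since `ψ ≤ 19 Υ★³ ε_m`, the bound on `ε_m` gives `√β★ ψ ≤ 1 / (2β★)`, while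
`√(1 - β★⁻¹) ≤ 1 - 1 / (2β★)`; adding the two yields `γ₁ ≤ 1`. Finally `γ₂ < 1` because
`α_{ε_m}` and `β★` are positive.
-/

open Matrix

/-- Spectral norm (operator 2-norm) of a real matrix. -/
noncomputable def spNorm {p q : ℕ} (M : Matrix (Fin p) (Fin q) ℝ) : ℝ :=
  ‖LinearMap.toContinuousLinearMap (Matrix.toEuclideanLin M)‖

/-- The spectral radius of a real square matrix is `< 1`. -/
def StabMat {n : ℕ} (M : Matrix (Fin n) (Fin n) ℝ) : Prop :=
  ∀ μ ∈ spectrum ℂ (M.map (algebraMap ℝ ℂ)), ‖μ‖ < 1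

/-- `(A, B)` is stabilizable. -/
def Stabilizable {n m : ℕ} (A : Matrix (Fin n) (Fin n) ℝ)
    (B : Matrix (Fin n) (Fin m) ℝ) : Prop :=
  ∃ K : Matrix (Fin m) (Fin n) ℝ, StabMat (A - B * K)

/-- Smallest (real) eigenvalue: `σ_min` for symmetric matrices. -/
noncomputable def minEig {k : ℕ} (M : Matrix (Fin k) (Fin k) ℝ) : ℝ :=
  sInf (spectrum ℝ M)

/-- Largest (real) eigenvalue: `σ_max` for symmetric matrices. -/
noncomputable def maxEig {k : ℕ} (M : Matrix (Fin k) (Fin k) ℝ) : ℝ :=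
  sSup (spectrum ℝ M)

/-- `S_B = B R⁻¹ Bᵀ`. -/
noncomputable def sMat {n m : ℕ} (R : Matrix (Fin m) (Fin m) ℝ)
    (B : Matrix (Fin n) (Fin m) ℝ) : Matrix (Fin n) (Fin n) ℝ :=
  B * R⁻¹ * Bᵀ

/-- Riccati map `𝓡_{A,B}(P) = Aᵀ P (I + S_B P)⁻¹ A + Q`. -/
noncomputable def ric {n m : ℕ} (R : Matrix (Fin m) (Fin m) ℝ)
    (Q A : Matrix (Fin n) (Fin n) ℝ) (B : Matrix (Fin n) (Fin m) ℝ)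
    (P : Matrix (Fin n) (Fin n) ℝ) : Matrix (Fin n) (Fin n) ℝ :=
  Aᵀ * P * (1 + sMat R B * P)⁻¹ * A + Q

/-- Riccati iterates: `𝓡^{(0)} = id`, `𝓡^{(i+1)} = 𝓡 ∘ 𝓡^{(i)}`. -/
noncomputable def ricIter {n m : ℕ} (R : Matrix (Fin m) (Fin m) ℝ)
    (Q A : Matrix (Fin n) (Fin n) ℝ) (B : Matrix (Fin n) (Fin m) ℝ) :
    ℕ → Matrix (Fin n) (Fin n) ℝ → Matrix (Fin n) (Fin n) ℝ
  | 0, P => P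
  | i + 1, P => ric R Q A B (ricIter R Q A B i P)

/-- Gain `𝓚_{A,B}(P) = (R + Bᵀ P B)⁻¹ Bᵀ P A`. -/
noncomputable def gain {n m : ℕ} (R : Matrix (Fin m) (Fin m) ℝ)
    (A : Matrix (Fin n) (Fin n) ℝ) (B : Matrix (Fin n) (Fin m) ℝ)
    (P : Matrix (Fin n) (Fin n) ℝ) : Matrix (Fin m) (Fin n) ℝ :=
  (R + Bᵀ * P * B)⁻¹ * (Bᵀ * P * A)

/-- Closed loop matrix `𝓛_{A,B}(P) = (I + S_B P)⁻¹ A`. -/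
noncomputable def clMat {n m : ℕ} (R : Matrix (Fin m) (Fin m) ℝ)
    (A : Matrix (Fin n) (Fin n) ℝ) (B : Matrix (Fin n) (Fin m) ℝ)
    (P : Matrix (Fin n) (Fin n) ℝ) : Matrix (Fin n) (Fin n) ℝ :=
  (1 + sMat R B * P)⁻¹ * A

/-- State transition matrix `Φ^{(j:i)}_{A,B}(P)`. -/
noncomputable def phiMat {n m : ℕ} (R : Matrix (Fin m) (Fin m) ℝ)
    (Q A : Matrix (Fin n) (Fin n) ℝ) (B : Matrix (Fin n) (Fin m) ℝ)
    (P : Matrix (Fin n) (Fin n) ℝ) (j i : ℕ) : Matrix (Fin n) (Fin n) ℝ :=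
  ((List.range (i - j)).map (fun k => clMat R A B (ricIter R Q A B (j + k) P))).prod

/-- Perturbed closed loop matrix `𝓛̄(P) = W(P)(H(P) + 𝓛_{A★,B★}(P))`. -/
noncomputable def lbarMat {n m : ℕ} (R : Matrix (Fin m) (Fin m) ℝ)
    (As : Matrix (Fin n) (Fin n) ℝ) (Bs : Matrix (Fin n) (Fin m) ℝ)
    (Ah : Matrix (Fin n) (Fin n) ℝ) (Bh : Matrix (Fin n) (Fin m) ℝ)
    (P : Matrix (Fin n) (Fin n) ℝ) : Matrix (Fin n) (Fin n) ℝ :=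
  (1 + (sMat R Bs - sMat R Bh) * P) *
    ((1 + sMat R Bs * P)⁻¹ * (Ah - As) + clMat R As Bs P)

/-- Perturbed state transition matrix `Φ̄^{(j:i)}(P)`. -/
noncomputable def phibarMat {n m : ℕ} (R : Matrix (Fin m) (Fin m) ℝ)
    (Q As : Matrix (Fin n) (Fin n) ℝ) (Bs : Matrix (Fin n) (Fin m) ℝ)
    (Ah : Matrix (Fin n) (Fin n) ℝ) (Bh : Matrix (Fin n) (Fin m) ℝ)
    (P : Matrix (Fin n) (Fin n) ℝ) (j i : ℕ) : Matrix (Fin n) (Fin n) ℝ :=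
  ((List.range (i - j)).map
    (fun k => lbarMat R As Bs Ah Bh (ricIter R Q As Bs (j + k) P))).prod

/-- The map `𝓜(P₁,P₂)`. -/
noncomputable def mMat {n m : ℕ} (R : Matrix (Fin m) (Fin m) ℝ)
    (As : Matrix (Fin n) (Fin n) ℝ) (Bs : Matrix (Fin n) (Fin m) ℝ)
    (Ah : Matrix (Fin n) (Fin n) ℝ) (Bh : Matrix (Fin n) (Fin m) ℝ)
    (P1 P2 : Matrix (Fin n) (Fin n) ℝ) : Matrix (Fin n) (Fin n) ℝ :=
  Ahᵀ * P2 * (1 + sMat R Bs * P2)⁻¹ * Ah - Asᵀ * P2 * (1 + sMat R Bs * P2)⁻¹ * As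
    + Ahᵀ * (1 + P1 * sMat R Bh)⁻¹ * P2 * (sMat R Bs - sMat R Bh) * P2 *
        (1 + sMat R Bs * P2)⁻¹ * Ah

/-- `β★ = σ_max(P★)/σ_min(Q)`. -/
noncomputable def betaStar {n : ℕ} (Q Pstar : Matrix (Fin n) (Fin n) ℝ) : ℝ :=
  maxEig Pstar / minEig Q

/-- `ψ(ε_m, ε_p)`. -/
noncomputable def psiF (U b em ep : ℝ) : ℝ :=
  em * (1 + (em + 2 * U) ^ 2 * (b * ep + U))

/-- `γ₁(ε_m, ε_p)`. -/
noncomputable def gamma1F (U b em ep : ℝ) : ℝ :=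
  Real.sqrt b * psiF U b em ep + Real.sqrt (1 - b⁻¹)

/-- `α_{ε_m} = (1 − 8‖P★‖² ε_m)^{−1/2}`, with `p = ‖P★‖`. -/
noncomputable def alphaF (p em : ℝ) : ℝ :=
  (1 - 8 * p ^ 2 * em) ^ (-(1 / 2) : ℝ)

/-- `γ₂(ε_m)`. -/
noncomputable def gamma2F (p b em : ℝ) : ℝ :=
  Real.sqrt (1 - (alphaF p em)⁻¹ * b⁻¹)

/-- `ψ̃(ε_m)`. -/
noncomputable def psitF (U em : ℝ) : ℝ :=
  (em ^ 2 + 2 * U * em) * (U + (em + U) ^ 2 * U ^ 2)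

/-- `Ê(ε_m, ε_p, i)`. -/
noncomputable def ehatF (p U b em ep : ℝ) (i : ℕ) : ℝ :=
  Real.sqrt (alphaF p em) * b *
    ((gamma1F U b em ep * gamma2F p b em) ^ i * ep +
      psitF U em * ((1 - (gamma1F U b em ep * gamma2F p b em) ^ i) /
        (1 - gamma1F U b em ep * gamma2F p b em)))

/-- `g(N, ε_m, ε_p)` with `r = σ_max(R)`, `p = ‖P★‖`, `b = β★`. -/
noncomputable def gF (m : ℕ) (σw r U p b em ep : ℝ) (N : ℕ) : ℝ :=
  128 * (m : ℝ) * σw ^ 2 * (r + U ^ 3) * U ^ 4 * p ^ 2 *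
    (em + ehatF p U b em ep (N - 1)) ^ 2

/-- The Lyapunov equation `Σ = (A−BK) Σ (A−BK)ᵀ + σ_w² I`. -/
def LyapEq {n m : ℕ} (As : Matrix (Fin n) (Fin n) ℝ) (Bs : Matrix (Fin n) (Fin m) ℝ)
    (K : Matrix (Fin m) (Fin n) ℝ) (σw : ℝ) (S : Matrix (Fin n) (Fin n) ℝ) : Prop :=
  S = (As - Bs * K) * S * (As - Bs * K)ᵀ + σw ^ 2 • (1 : Matrix (Fin n) (Fin n) ℝ)

/-- `J_K = tr((Q + Kᵀ R K) Σ)`. -/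
noncomputable def lqCost {n m : ℕ} (R : Matrix (Fin m) (Fin m) ℝ)
    (Q : Matrix (Fin n) (Fin n) ℝ) (K : Matrix (Fin m) (Fin n) ℝ)
    (S : Matrix (Fin n) (Fin n) ℝ) : ℝ :=
  ((Q + Kᵀ * R * K) * S).trace

open scoped MatrixOrder

section Spectrum

variable {k : ℕ} {M : Matrix (Fin k) (Fin k) ℝ}

open scoped Matrix.Norms.L2Operator in
lemma abs_le_spNorm_of_mem_spectrum {μ : ℝ} (hμ : μ ∈ spectrum ℝ M) : |μ| ≤ spNorm M := by
  have hone : ‖(1 : Matrix (Fin k) (Fin k) ℝ)‖ ≤ 1 := by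
    rw [Matrix.cstar_norm_def, map_one]
    exact ContinuousLinearMap.norm_id_le
  calc |μ| = ‖μ‖ := (Real.norm_eq_abs μ).symm
    _ ≤ ‖M‖ * ‖(1 : Matrix (Fin k) (Fin k) ℝ)‖ := spectrum.norm_le_norm_mul_of_mem hμ
    _ ≤ ‖M‖ := mul_le_of_le_one_right (norm_nonneg M) hone
    _ = spNorm M := rfl

namespace Matrix.IsHermitian

variable (hM : M.IsHermitian)
include hM

lemma finite_spectrum_real : (spectrum ℝ M).Finite :=
  hM.spectrum_real_eq_range_eigenvalues ▸ Set.finite_range _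

lemma nonempty_spectrum_real (hk : 0 < k) : (spectrum ℝ M).Nonempty :=
  ⟨_, hM.eigenvalues_mem_spectrum_real ⟨0, hk⟩⟩

lemma minEig_mem_spectrum (hk : 0 < k) : minEig M ∈ spectrum ℝ M :=
  (hM.nonempty_spectrum_real hk).csInf_mem hM.finite_spectrum_real

lemma maxEig_mem_spectrum (hk : 0 < k) : maxEig M ∈ spectrum ℝ M :=
  (hM.nonempty_spectrum_real hk).csSup_mem hM.finite_spectrum_real

lemma algebraMap_minEig_le : algebraMap ℝ _ (minEig M) ≤ M :=
  (algebraMap_le_iff_le_spectrum hM.isSelfAdjoint).2 fun _ hx ↦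
    csInf_le hM.finite_spectrum_real.bddBelow hx

lemma le_minEig_of_algebraMap_le (hk : 0 < k) {r : ℝ} (h : algebraMap ℝ _ r ≤ M) :
    r ≤ minEig M :=
  (algebraMap_le_iff_le_spectrum hM.isSelfAdjoint).1 h _ (hM.minEig_mem_spectrum hk)

lemma le_maxEig_of_algebraMap_le (hk : 0 < k) {r : ℝ} (h : algebraMap ℝ _ r ≤ M) :
    r ≤ maxEig M :=
  (algebraMap_le_iff_le_spectrum hM.isSelfAdjoint).1 h _ (hM.maxEig_mem_spectrum hk)

lemma maxEig_le_spNorm (hk : 0 < k) : maxEig M ≤ spNorm M :=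
  (le_abs_self _).trans (abs_le_spNorm_of_mem_spectrum (hM.maxEig_mem_spectrum hk))

end Matrix.IsHermitian

end Spectrum

section Riccati

variable {n m : ℕ} {R : Matrix (Fin m) (Fin m) ℝ} {Q A P : Matrix (Fin n) (Fin n) ℝ}

lemma Matrix.PosDef.sMat_posSemidef (hR : R.PosDef) (B : Matrix (Fin n) (Fin m) ℝ) :
    (sMat R B).PosSemidef := by
  have h := hR.inv.posSemidef.mul_mul_conjTranspose_same B
  rwa [conjTranspose_eq_transpose_of_trivial] at h

lemma mul_inv_one_add_mul_eq_inv_inv_add (S : Matrix (Fin n) (Fin n) ℝ) (hP : IsUnit P.det) :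
    P * (1 + S * P)⁻¹ = (P⁻¹ + S)⁻¹ := by
  rw [show P⁻¹ + S = (1 + S * P) * P⁻¹ by
      rw [add_mul, one_mul, Matrix.mul_assoc, mul_nonsing_inv _ hP, mul_one],
    Matrix.mul_inv_rev, nonsing_inv_nonsing_inv _ hP]

lemma le_ric (hR : R.PosDef) (hP : P.PosDef) (B : Matrix (Fin n) (Fin m) ℝ) :
    Q ≤ ric R Q A B P := by
  have hmid : (P * (1 + sMat R B * P)⁻¹).PosSemidef := by
    rw [mul_inv_one_add_mul_eq_inv_inv_add _ hP.det_pos.ne'.isUnit]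
    exact (hP.inv.add_posSemidef (hR.sMat_posSemidef B)).inv.posSemidef
  rw [Matrix.le_iff, ric, add_sub_cancel_right, Matrix.mul_assoc Aᵀ P]
  simpa only [conjTranspose_eq_transpose_of_trivial] using hmid.conjTranspose_mul_mul_same A

end Riccati

section BetaStar

variable {n : ℕ} {Q P : Matrix (Fin n) (Fin n) ℝ}

lemma Matrix.isHermitian_of_one_le (h : 1 ≤ P) : P.IsHermitian :=
  (PosSemidef.one.nonneg.trans h).posSemidef.isHermitian

lemma one_le_minEig (hn : 0 < n) (hQ : 1 ≤ Q) : 1 ≤ minEig Q :=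
  (isHermitian_of_one_le hQ).le_minEig_of_algebraMap_le hn (by simpa using hQ)

variable (hn : 0 < n) (hQ : 1 ≤ Q) (hQP : Q ≤ P)
include hn hQ hQP

lemma minEig_le_maxEig_of_le : minEig Q ≤ maxEig P :=
  (isHermitian_of_one_le (hQ.trans hQP)).le_maxEig_of_algebraMap_le hn
    ((isHermitian_of_one_le hQ).algebraMap_minEig_le.trans hQP)

lemma one_le_betaStar : 1 ≤ betaStar Q P :=
  (one_le_div (zero_lt_one.trans_le (one_le_minEig hn hQ))).2 (minEig_le_maxEig_of_le hn hQ hQP)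

lemma betaStar_le_spNorm : betaStar Q P ≤ spNorm P := by
  have hmin := one_le_minEig hn hQ
  have hmax := minEig_le_maxEig_of_le hn hQ hQP
  exact (div_le_self (by linarith) hmin).trans
    ((isHermitian_of_one_le (hQ.trans hQP)).maxEig_le_spNorm hn)

end BetaStar

section Scalar

variable {U b p εm εp : ℝ}

lemma sqrt_one_sub_le_one_sub_half {x : ℝ} (hx : x ≤ 2) : √(1 - x) ≤ 1 - x / 2 :=
  Real.sqrt_le_iff.2 ⟨by linarith, by nlinarith [sq_nonneg x]⟩

lemma psiF_le (hU : 1 ≤ U) (hεm : 0 ≤ εm) (hεmU : εm ≤ U) (h2 : b * εp ≤ 1) :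
    psiF U b εm εp ≤ 19 * U ^ 3 * εm := by
  have hsq : (εm + 2 * U) ^ 2 ≤ 9 * U ^ 2 := by nlinarith
  have hlin : b * εp + U ≤ 2 * U := by linarith
  have hprod : (εm + 2 * U) ^ 2 * (b * εp + U) ≤ 18 * U ^ 3 :=
    calc (εm + 2 * U) ^ 2 * (b * εp + U) ≤ (εm + 2 * U) ^ 2 * (2 * U) :=
          mul_le_mul_of_nonneg_left hlin (sq_nonneg _)
      _ ≤ 9 * U ^ 2 * (2 * U) := by gcongr
      _ = 18 * U ^ 3 := by ring
  have hU3 : 1 ≤ U ^ 3 := one_le_pow₀ hU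
  unfold psiF
  nlinarith

lemma sqrt_mul_psiF_le (hU : 1 ≤ U) (hb : 1 ≤ b) (hbp : b ≤ p) (hεm : 0 ≤ εm) (hεmU : εm ≤ U)
    (h1 : εm ≤ 1 / (40 * U ^ 4 * p ^ 2)) (h2 : b * εp ≤ 1) :
    √b * psiF U b εm εp ≤ 1 / (2 * b) := by
  have hp : 0 < p := by linarith
  have hsmall : εm * (40 * U ^ 4 * p ^ 2) ≤ 1 := (le_div_iff₀ (by positivity)).1 h1
  have hsqrt : √b ≤ p := (Real.sqrt_le_self_iff.2 (Or.inr hb)).trans hbp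
  have hψ : √b * psiF U b εm εp ≤ p * (19 * U ^ 3 * εm) :=
    (mul_le_mul_of_nonneg_left (psiF_le hU hεm hεmU h2) (Real.sqrt_nonneg b)).trans
      (mul_le_mul_of_nonneg_right hsqrt (by positivity))
  have hU34 : U ^ 3 ≤ U ^ 4 := pow_le_pow_right₀ hU (by norm_num)
  rw [le_div_iff₀ (by positivity)]
  calc √b * psiF U b εm εp * (2 * b) ≤ p * (19 * U ^ 3 * εm) * (2 * p) := by
        gcongr
    _ = 38 * (p ^ 2 * εm) * U ^ 3 := by ring
    _ ≤ 40 * (p ^ 2 * εm) * U ^ 4 := by gcongr; norm_num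
    _ ≤ 1 := by linarith

lemma gamma1F_le_one (hU : 1 ≤ U) (hb : 1 ≤ b) (hbp : b ≤ p) (hεm : 0 ≤ εm) (hεmU : εm ≤ U)
    (h1 : εm ≤ 1 / (40 * U ^ 4 * p ^ 2)) (h2 : b * εp ≤ 1) : gamma1F U b εm εp ≤ 1 := by
  have hψ := sqrt_mul_psiF_le hU hb hbp hεm hεmU h1 h2
  have hroot := sqrt_one_sub_le_one_sub_half (x := b⁻¹) (by linarith [inv_le_one_of_one_le₀ hb])
  have hhalf : 1 / (2 * b) = b⁻¹ / 2 := by field_simp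
  unfold gamma1F
  linarith

lemma gamma2F_lt_one (hb : 0 < b) (h3 : εm < 1 / (8 * p ^ 2)) : gamma2F p b εm < 1 := by
  have hbase : 0 < 1 - 8 * p ^ 2 * εm := by
    rcases eq_or_ne p 0 with rfl | hp
    · norm_num
    · have := (lt_div_iff₀ (by positivity)).1 h3
      linarith
  have hα : 0 < alphaF p εm := Real.rpow_pos_of_pos hbase _
  rw [gamma2F, Real.sqrt_lt' one_pos]
  have hpos : 0 < (alphaF p εm)⁻¹ * b⁻¹ := by positivity
  linarith

end Scalar

theorem stmt16_general {n m : ℕ} (hn : 0 < n)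
    (Astar : Matrix (Fin n) (Fin n) ℝ) (Bstar : Matrix (Fin n) (Fin m) ℝ)
    (R : Matrix (Fin m) (Fin m) ℝ) (Q Pstar : Matrix (Fin n) (Fin n) ℝ)
    (U εm εp : ℝ)
    (hR : (R - 1).PosSemidef) (hQ : (Q - 1).PosSemidef)
    (hU1 : 1 ≤ U) (hUem : εm ≤ U)
    (hPstar : Pstar.PosDef) (hfix : Pstar = ric R Q Astar Bstar Pstar)
    (hεm : 0 ≤ εm)
    (h1 : εm ≤ 1 / (40 * U ^ 4 * spNorm Pstar ^ 2))
    (h2 : betaStar Q Pstar * εp ≤ 1)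
    (h3 : εm < 1 / (8 * spNorm Pstar ^ 2)) :
    gamma1F U (betaStar Q Pstar) εm εp ≤ 1 ∧
    gamma1F U (betaStar Q Pstar) εm εp *
      gamma2F (spNorm Pstar) (betaStar Q Pstar) εm < 1 := by
  have hRpd : R.PosDef := by simpa using PosDef.posSemidef_add hR PosDef.one
  have hQP : Q ≤ Pstar := hfix ▸ le_ric hRpd hPstar Bstar
  have hb := one_le_betaStar hn (le_iff.2 hQ) hQP
  have hγ₁ := gamma1F_le_one hU1 hb (betaStar_le_spNorm hn (le_iff.2 hQ) hQP) hεm hUem h1 h2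
  have hγ₂ := gamma2F_lt_one (zero_lt_one.trans_le hb) h3
  exact ⟨hγ₁, (mul_le_of_le_one_left (Real.sqrt_nonneg _) hγ₁).trans_lt hγ₂⟩

theorem stmt16 {n m : ℕ} (hn : 0 < n) (hm : 0 < m) (hmn : m ≤ n)
    (Astar : Matrix (Fin n) (Fin n) ℝ) (Bstar : Matrix (Fin n) (Fin m) ℝ)
    (R : Matrix (Fin m) (Fin m) ℝ) (Q Pstar : Matrix (Fin n) (Fin n) ℝ)
    (U εm εp : ℝ)
    (hR : (R - 1).PosSemidef) (hQ : (Q - 1).PosSemidef)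
    (hstab : Stabilizable Astar Bstar)
    (hU1 : 1 ≤ U) (hUem : εm ≤ U)
    (hAb : spNorm Astar ≤ U) (hBb : spNorm Bstar ≤ U) (hPb : spNorm Pstar ≤ U)
    (hPstar : Pstar.PosDef) (hfix : Pstar = ric R Q Astar Bstar Pstar)
    (hεm : 0 ≤ εm) (hεp : 0 ≤ εp)
    (h1 : εm ≤ 1 / (40 * U ^ 4 * spNorm Pstar ^ 2))
    (h2 : betaStar Q Pstar * εp ≤ 1)
    (h3 : εm < 1 / (8 * spNorm Pstar ^ 2)) :
    gamma1F U (betaStar Q Pstar) εm εp ≤ 1 ∧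
    gamma1F U (betaStar Q Pstar) εm εp *
      gamma2F (spNorm Pstar) (betaStar Q Pstar) εm < 1 :=
  stmt16_general hn Astar Bstar R Q Pstar U εm εp hR hQ hU1 hUem hPstar hfix hεm h1 h2 h3
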